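/- For every natural number n ≥ 1 and every 0 ≤ k ≤ n−1, the set of points x ∈ |L^n_{k+1}| at which f is not locally affine relative to |L^n_{k+1}| (that is, there is no set U that is open in the subspace topology of |L^n_{k+1}|, contains x, and admits an affine map g : ℝ^n → ℝ with f = g on U) is exactly |L^n_k|. This is the support-level statement of the divisor relation max(0, x_1, …, x_n) · L^n_{k+1} = L^n_k. -/

import Mathlib

open Finset

/-- The generator `-e_i` of the fan, for `i ∈ {0,1,…,n}`:
for `i = 0` it is `-e_0 = e_1 + ⋯ + e_n`, and for `i ≥ 1` it is `-e_i`. -/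
def negE (n : ℕ) (i : Fin (n + 1)) : Fin n → ℝ :=
  fun j => if (i : ℕ) = 0 then 1 else if (j : ℕ) + 1 = (i : ℕ) then -1 else 0

/-- The cone `σ_I`: all nonnegative combinations of the vectors `-e_i`, `i ∈ I`. -/
def sigmaCone (n : ℕ) (I : Finset (Fin (n + 1))) : Set (Fin n → ℝ) :=
  { x | ∃ lam : Fin (n + 1) → ℝ, (∀ i, 0 ≤ lam i) ∧ x = ∑ i ∈ I, lam i • negE n i }

/-- The relative interior of `σ_I`: combinations with strictly positive coefficients. -/
def relintCone (n : ℕ) (I : Finset (Fin (n + 1))) : Set (Fin n → ℝ) :=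
  { x | ∃ lam : Fin (n + 1) → ℝ, (∀ i ∈ I, 0 < lam i) ∧ x = ∑ i ∈ I, lam i • negE n i }

/-- The support `|L^n_k|`: the union of the cones `σ_I` over proper subsets
`I ⊊ {0,1,…,n}` with `|I| ≤ k`. -/
def suppL (n k : ℕ) : Set (Fin n → ℝ) :=
  ⋃ I ∈ { I : Finset (Fin (n + 1)) | I ≠ Finset.univ ∧ I.card ≤ k }, sigmaCone n I

/-- The `j`-th extended coordinate of `x`, for `j ∈ {0,1,…,n}`, with `x_0 := 0`. -/
def coordX {n : ℕ} (x : Fin n → ℝ) (j : Fin (n + 1)) : ℝ :=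
  if h : (j : ℕ) = 0 then 0 else x ⟨(j : ℕ) - 1, by have := j.isLt; omega⟩

/-- The tropical polynomial `f(x) = max(0, x_1, …, x_n)`. -/
def tropF {n : ℕ} (x : Fin n → ℝ) : ℝ :=
  (Finset.univ : Finset (Fin (n + 1))).sup' Finset.univ_nonempty (coordX x)

/-! Let `M(x)` be the set of indices `j ∈ {0,…,n}` at which `f(x) = max_j x_j` is attained.
Then `x ∈ σ_I` iff every index outside `I` lies in `M(x)`, so `x ∈ |L^n_k|` iff at most `k`
indices miss the maximum. If exactly `k + 1` miss it, every point of `|L^n_{k+1}|` near `x` has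
the same set `M`, so there `f = x_j` for any fixed `j ∈ M(x)`. If at most `k ≤ n - 1` miss
it, `M(x)` has at least two elements, so for every `i` the ray `x + u • (-e_i)`, `u > 0`, stays in
`|L^n_{k+1}|` and `f` has slope `[i = 0]` along it; no affine map has these slopes, since the
`-e_i` sum to zero. -/

section LocallyAffine

variable {E : Type*} [TopologicalSpace E] [AddCommGroup E] [Module ℝ E]

def IsLocallyAffineWithin (f : E → ℝ) (S : Set E) (x : E) : Prop :=
  ∃ (U : Set E) (g : E →ᵃ[ℝ] ℝ), (∃ V : Set E, IsOpen V ∧ U = V ∩ S) ∧ x ∈ U ∧ ∀ y ∈ U, f y = g y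

lemma IsOpen.linear_eq_of_eqOn_ray [ContinuousAdd E] [ContinuousSMul ℝ E]
    {f : E → ℝ} {S V : Set E} {x v : E} {a : ℝ} (hV : IsOpen V) (hx : x ∈ V ∩ S)
    (g : E →ᵃ[ℝ] ℝ) (hfg : ∀ y ∈ V ∩ S, f y = g y)
    (hray : ∀ u : ℝ, 0 < u → x + u • v ∈ S ∧ f (x + u • v) = f x + u * a) :
    g.linear v = a := by
  have hnear : ∀ᶠ u : ℝ in nhdsWithin 0 (Set.Ioi 0), x + u • v ∈ V := by
    refine nhdsWithin_le_nhds (hV.mem_nhds ?_ |> ContinuousAt.preimage_mem_nhds ?_)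
    · fun_prop
    · simpa using hx.1
  obtain ⟨u, huV, hu⟩ := (hnear.and self_mem_nhdsWithin).exists
  obtain ⟨huS, hfu⟩ := hray u hu
  have hg : g (x + u • v) = g x + u * g.linear v := by
    rw [add_comm x, ← vadd_eq_add, AffineMap.map_vadd, map_smul, smul_eq_mul, vadd_eq_add,
      add_comm]
  have : u * g.linear v = u * a := by
    linarith [hfg x hx, hfg _ ⟨huV, huS⟩]
  exact mul_left_cancel₀ hu.ne' this

end LocallyAffine

section TropicalFan

variable {n : ℕ}

lemma coordX_zero (x : Fin n → ℝ) : coordX x 0 = 0 := rfl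

lemma coordX_succ (x : Fin n → ℝ) (m : Fin n) : coordX x m.succ = x m := rfl

def coordXₗ (j : Fin (n + 1)) : (Fin n → ℝ) →ₗ[ℝ] ℝ where
  toFun x := coordX x j
  map_add' x y := by cases j using Fin.cases <;> simp [coordX_zero, coordX_succ]
  map_smul' c x := by cases j using Fin.cases <;> simp [coordX_zero, coordX_succ]

@[simp]
lemma coordXₗ_apply (j : Fin (n + 1)) (x : Fin n → ℝ) : coordXₗ j x = coordX x j := rfl

lemma coordX_negE (i j : Fin (n + 1)) :
    coordX (negE n i) j = (if i = 0 then 1 else 0) - (if i = j then 1 else 0) := by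
  cases j using Fin.cases with
  | zero => simp [coordX_zero]
  | succ m =>
    cases i using Fin.cases with
    | zero => simp [coordX_succ, negE, (Fin.succ_ne_zero m).symm]
    | succ l =>
      simp only [coordX_succ, negE, Fin.ext_iff]
      split_ifs <;> simp_all

lemma coordX_sum_smul_negE (I : Finset (Fin (n + 1))) (c : Fin (n + 1) → ℝ)
    (j : Fin (n + 1)) :
    coordX (∑ i ∈ I, c i • negE n i) j
      = (if 0 ∈ I then c 0 else 0) - (if j ∈ I then c j else 0) := by
  simp_rw [← coordXₗ_apply, map_sum, map_smul, coordXₗ_apply, coordX_negE, smul_eq_mul,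
    mul_sub, mul_ite, mul_one, mul_zero, Finset.sum_sub_distrib, Finset.sum_ite_eq']

lemma sum_sub_coordX_smul_negE (x : Fin n → ℝ) (t : ℝ) :
    ∑ i, (t - coordX x i) • negE n i = x := by
  funext m
  simpa [coordX_zero, coordX_succ] using
    coordX_sum_smul_negE univ (fun i => t - coordX x i) m.succ

lemma coordX_le_tropF (x : Fin n → ℝ) (j : Fin (n + 1)) : coordX x j ≤ tropF x :=
  le_sup' (coordX x) (mem_univ j)

lemma exists_coordX_eq_tropF (x : Fin n → ℝ) : ∃ j, coordX x j = tropF x := by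
  obtain ⟨j, -, hj⟩ := exists_mem_eq_sup' univ_nonempty (coordX x)
  exact ⟨j, hj.symm⟩

lemma tropF_eq_of_forall_le {x : Fin n → ℝ} {a : ℝ} {j : Fin (n + 1)}
    (hle : ∀ i, coordX x i ≤ a) (hj : coordX x j = a) : tropF x = a :=
  le_antisymm (sup'_le _ _ fun i _ => hle i) (hj ▸ coordX_le_tropF x j)

lemma continuous_coordX (j : Fin (n + 1)) : Continuous fun x : Fin n → ℝ => coordX x j :=
  (coordXₗ j).continuous_of_finiteDimensional

lemma continuous_tropF : Continuous (tropF : (Fin n → ℝ) → ℝ) :=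
  Continuous.finset_sup'_apply _ fun j _ => continuous_coordX j

/-- The smallest `I` with `x ∈ σ_I`. -/
noncomputable def coneSupport (x : Fin n → ℝ) : Finset (Fin (n + 1)) :=
  {i | coordX x i < tropF x}

lemma mem_coneSupport {x : Fin n → ℝ} {i : Fin (n + 1)} :
    i ∈ coneSupport x ↔ coordX x i < tropF x := by
  simp [coneSupport]

lemma notMem_coneSupport {x : Fin n → ℝ} {i : Fin (n + 1)} :
    i ∉ coneSupport x ↔ coordX x i = tropF x := by
  rw [mem_coneSupport, not_lt]
  exact (coordX_le_tropF x i).ge_iff_eq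

lemma coneSupport_ne_univ (x : Fin n → ℝ) : coneSupport x ≠ univ := fun h => by
  obtain ⟨j, hj⟩ := exists_coordX_eq_tropF x
  exact notMem_coneSupport.2 hj (h ▸ mem_univ j)

lemma mem_sigmaCone_iff {I : Finset (Fin (n + 1))} {x : Fin n → ℝ} :
    x ∈ sigmaCone n I ↔ coneSupport x ⊆ I := by
  constructor
  · rintro ⟨c, hc, rfl⟩ j hj
    by_contra hjI
    have hle : ∀ i, coordX (∑ i ∈ I, c i • negE n i) i ≤ coordX (∑ i ∈ I, c i • negE n i) j :=
      fun i => by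
        rw [coordX_sum_smul_negE, coordX_sum_smul_negE, if_neg hjI]
        split_ifs <;> linarith [hc i]
    exact (mem_coneSupport.1 hj).ne (tropF_eq_of_forall_le hle rfl).symm
  · intro hI
    refine ⟨fun i => tropF x - coordX x i, fun i => sub_nonneg.2 (coordX_le_tropF x i), ?_⟩
    rw [sum_subset (subset_univ I)]
    · exact (sum_sub_coordX_smul_negE x _).symm
    · intro i _ hi
      beta_reduce
      rw [notMem_coneSupport.1 fun h => hi (hI h), sub_self, zero_smul]

lemma mem_suppL_iff {k : ℕ} {x : Fin n → ℝ} : x ∈ suppL n k ↔ #(coneSupport x) ≤ k := by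
  simp only [suppL, Set.mem_iUnion, mem_sigmaCone_iff, exists_prop]
  constructor
  · rintro ⟨I, ⟨-, hIk⟩, hxI⟩
    exact (card_le_card hxI).trans hIk
  · exact fun hk => ⟨_, ⟨coneSupport_ne_univ x, hk⟩, subset_rfl⟩

lemma sum_negE : ∑ i, negE n i = 0 := by
  simpa [coordX] using sum_sub_coordX_smul_negE (0 : Fin n → ℝ) 1

lemma coordX_add_smul_negE (x : Fin n → ℝ) (u : ℝ) (i j : Fin (n + 1)) :
    coordX (x + u • negE n i) j
      = coordX x j + u * ((if i = 0 then 1 else 0) - (if i = j then 1 else 0)) := by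
  rw [← coordXₗ_apply, map_add, map_smul, coordXₗ_apply, coordXₗ_apply, coordX_negE,
    smul_eq_mul]

section Ray

variable {x : Fin n → ℝ} {i j : Fin (n + 1)} {u : ℝ}

lemma tropF_add_smul_negE (hj : j ∉ coneSupport x) (hji : j ≠ i) (hu : 0 ≤ u) :
    tropF (x + u • negE n i) = tropF x + u * (if i = 0 then 1 else 0) := by
  refine tropF_eq_of_forall_le (j := j) (fun l => ?_) ?_
  · rw [coordX_add_smul_negE]
    have := coordX_le_tropF x l
    split_ifs <;> nlinarith
  · rw [coordX_add_smul_negE, if_neg hji.symm, notMem_coneSupport.1 hj, sub_zero]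

lemma coneSupport_add_smul_negE_subset (hj : j ∉ coneSupport x) (hji : j ≠ i) (hu : 0 ≤ u) :
    coneSupport (x + u • negE n i) ⊆ insert i (coneSupport x) := by
  intro l hl
  by_contra hl'
  rw [mem_insert, not_or] at hl'
  refine notMem_coneSupport.2 ?_ hl
  rw [coordX_add_smul_negE, tropF_add_smul_negE hj hji hu, if_neg (Ne.symm hl'.1),
    notMem_coneSupport.1 hl'.2, sub_zero]

end Ray

lemma isOpen_setOf_subset_coneSupport (s : Finset (Fin (n + 1))) :
    IsOpen {y : Fin n → ℝ | s ⊆ coneSupport y} := by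
  simp only [subset_iff, mem_coneSupport, Set.ofPred_forall]
  exact isOpen_biInter_finset fun i _ => isOpen_lt (continuous_coordX i) continuous_tropF

end TropicalFan

section Divisor

variable {n : ℕ} {x : Fin n → ℝ}

lemma isLocallyAffineWithin_suppL_of_card_coneSupport {k : ℕ} (hx : #(coneSupport x) = k) :
    IsLocallyAffineWithin tropF (suppL n k) x := by
  obtain ⟨j, hj⟩ := exists_coordX_eq_tropF x
  refine ⟨_, (coordXₗ j).toAffineMap, ⟨_, isOpen_setOf_subset_coneSupport (coneSupport x), rfl⟩,
    ⟨Finset.Subset.refl _, mem_suppL_iff.2 hx.le⟩, ?_⟩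
  rintro y ⟨hsub, hy⟩
  have hxy : coneSupport x = coneSupport y :=
    eq_of_subset_of_card_le hsub (hx ▸ mem_suppL_iff.1 hy)
  exact (notMem_coneSupport.1 (hxy ▸ notMem_coneSupport.2 hj)).symm

lemma not_isLocallyAffineWithin_suppL_succ {k : ℕ} (hx : #(coneSupport x) ≤ k) (hkn : k < n) :
    ¬ IsLocallyAffineWithin tropF (suppL n (k + 1)) x := by
  rintro ⟨_, g, ⟨V, hV, rfl⟩, hxU, hfg⟩
  have hcard : 1 < #(coneSupport x)ᶜ := by
    rw [card_compl, Fintype.card_fin]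
    omega
  have hslope : ∀ i, g.linear (negE n i) = if i = 0 then 1 else 0 := fun i => by
    obtain ⟨j, hj, hji⟩ := exists_mem_ne hcard i
    rw [mem_compl] at hj
    refine hV.linear_eq_of_eqOn_ray hxU g hfg fun u hu => ⟨?_, tropF_add_smul_negE hj hji hu.le⟩
    refine mem_suppL_iff.2 ((card_le_card (coneSupport_add_smul_negE_subset hj hji hu.le)).trans ?_)
    exact (card_insert_le _ _).trans (by omega)
  simpa [map_sum, hslope] using congrArg g.linear (sum_negE (n := n))

end Divisor

/-- For `n ≥ 1` and `0 ≤ k ≤ n - 1`, the set of points of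
`|L^n_{k+1}|` at which `f` is not locally affine relative to `|L^n_{k+1}|`
(no relatively open neighborhood on which `f` agrees with an affine map)
is exactly `|L^n_k|`: the support-level statement of
`max(0, x_1, …, x_n) · L^n_{k+1} = L^n_k`. -/
theorem tropF_divisor_support (n k : ℕ) (hn : 1 ≤ n) (hk : k ≤ n - 1) :
    { x ∈ suppL n (k + 1) |
      ¬ ∃ (U : Set (Fin n → ℝ)) (g : (Fin n → ℝ) →ᵃ[ℝ] ℝ),
          (∃ V : Set (Fin n → ℝ), IsOpen V ∧ U = V ∩ suppL n (k + 1)) ∧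
          x ∈ U ∧ ∀ y ∈ U, tropF y = g y } = suppL n k := by
  ext x
  change x ∈ suppL n (k + 1) ∧ ¬ IsLocallyAffineWithin tropF (suppL n (k + 1)) x ↔ _
  rw [mem_suppL_iff, mem_suppL_iff]
  constructor
  · rintro ⟨hx, hnot⟩
    by_contra hxk
    exact hnot (isLocallyAffineWithin_suppL_of_card_coneSupport (by omega))
  · exact fun hx => ⟨by omega, not_isLocallyAffineWithin_suppL_succ hx (by omega)⟩
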